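/- Let B be a Banach space, V, W : B → [1,∞) continuous, β, δ > 0, and define d̂_{β,δ}(x,y) = min(δ⁻¹ρ_W(x,y), 2 + βV(x) + βV(y)). A C¹ function φ : B → ℝ satisfies |φ(x) − φ(y)| ≤ d̂_{β,δ}(x,y) for all x, y if and only if, after possibly adding a constant to φ, one has ‖Dφ(x)‖ ≤ δ⁻¹W(x) and |φ(x)| ≤ 1 + βV(x) for all x. -/

import Mathlib

open MeasureTheory

variable {B : Type*} [NormedAddCommGroup B] [NormedSpace ℝ B] [CompleteSpace B]
  [TopologicalSpace.SeparableSpace B]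

/-- The weighted path (pseudo-)distance associated to a weight `W`. -/
noncomputable def rhoW (W : B → ℝ) (x y : B) : ℝ :=
  sInf { r : ℝ | ∃ γ : ℝ → B, ContDiff ℝ 1 γ ∧ γ 0 = x ∧ γ 1 = y ∧
    r = ∫ s in (0:ℝ)..1, W (γ s) * ‖deriv γ s‖ }

/-- The distance `d̂_{β,δ}(x,y) = δ⁻¹ ρ_W(x,y) ∧ (2 + βV(x) + βV(y))`. -/
noncomputable def dHat (V W : B → ℝ) (β δ : ℝ) (x y : B) : ℝ :=
  min (δ⁻¹ * rhoW W x y) (2 + β * V x + β * V y)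

/-!
The gradient bound and `ρ_W` control each other through the fundamental theorem of calculus:
integrating `‖Dφ‖ ≤ δ⁻¹ W` along a curve bounds `|φ x - φ y|` by `δ⁻¹` times its weighted
length, and conversely, comparing `φ` along short segments `t ↦ x + t v` with
`ρ_W(x, x + t v) ≤ |t| ‖v‖ ∫₀¹ W(x + s t v) ds` bounds the directional derivative at `x` by
`δ⁻¹ W(x) ‖v‖` as `t → 0`. The bound `|φ x - φ y| ≤ 2 + βV(x) + βV(y)` says exactly that
`φ(y) - 1 - βV(y) ≤ φ(x) + 1 + βV(x)` for all `x, y`, so a constant fits between the supremum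
of the left side and the infimum of the right side.
-/

section

variable {E : Type*} [NormedAddCommGroup E] [NormedSpace ℝ E]

def weightedLengths (W : E → ℝ) (x y : E) : Set ℝ :=
  { r | ∃ γ : ℝ → E, ContDiff ℝ 1 γ ∧ γ 0 = x ∧ γ 1 = y ∧
    r = ∫ s in (0:ℝ)..1, W (γ s) * ‖deriv γ s‖ }

theorem rhoW_eq_sInf_weightedLengths (W : E → ℝ) (x y : E) :
    rhoW W x y = sInf (weightedLengths W x y) := rfl

theorem weightedLengths_nonempty (W : E → ℝ) (x y : E) : (weightedLengths W x y).Nonempty :=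
  ⟨_, fun s => x + s • (y - x), by fun_prop, by simp, by simp, rfl⟩

theorem weightedLengths_bddBelow {W : E → ℝ} (hW : ∀ x, 0 ≤ W x) (x y : E) :
    BddBelow (weightedLengths W x y) := by
  refine ⟨0, ?_⟩
  rintro _ ⟨γ, -, -, -, rfl⟩
  exact intervalIntegral.integral_nonneg zero_le_one fun s _ => mul_nonneg (hW _) (norm_nonneg _)

theorem rhoW_add_le {W : E → ℝ} (hW : ∀ x, 0 ≤ W x) (x w : E) :
    rhoW W x (x + w) ≤ ‖w‖ * ∫ s in (0:ℝ)..1, W (x + s • w) := by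
  have hderiv : deriv (fun s : ℝ => x + s • w) = fun _ => w := by
    ext s
    simpa using (((hasDerivAt_id s).smul_const w).const_add x).deriv
  refine csInf_le (weightedLengths_bddBelow hW x (x + w))
    ⟨fun s => x + s • w, by fun_prop, by simp, by simp, ?_⟩
  rw [hderiv, intervalIntegral.integral_mul_const, mul_comm]

theorem abs_sub_le_integral_of_norm_fderiv_le {φ g : E → ℝ} (hφ : ContDiff ℝ 1 φ)
    (hg : Continuous g) (hbound : ∀ x, ‖fderiv ℝ φ x‖ ≤ g x) {γ : ℝ → E}
    (hγ : ContDiff ℝ 1 γ) {a b : ℝ} (hab : a ≤ b) :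
    |φ (γ b) - φ (γ a)| ≤ ∫ s in a..b, g (γ s) * ‖deriv γ s‖ := by
  have hγ' : Continuous (deriv γ) := hγ.continuous_deriv le_rfl
  have hchain : ∀ s, HasDerivAt (fun t => φ (γ t)) (fderiv ℝ φ (γ s) (deriv γ s)) s := fun s =>
    ((hφ.differentiable one_ne_zero (γ s)).hasFDerivAt).comp_hasDerivAt s
      ((hγ.differentiable one_ne_zero s).hasDerivAt)
  have hcont : Continuous fun s => fderiv ℝ φ (γ s) (deriv γ s) :=
    ((hφ.continuous_fderiv one_ne_zero).comp hγ.continuous).clm_apply hγ'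
  rw [← intervalIntegral.integral_eq_sub_of_hasDerivAt (fun s _ => hchain s)
    (hcont.intervalIntegrable a b), ← Real.norm_eq_abs]
  refine intervalIntegral.norm_integral_le_of_norm_le hab (Filter.Eventually.of_forall
    fun s _ => ?_) (((hg.comp hγ.continuous).mul hγ'.norm).intervalIntegrable a b)
  exact ((fderiv ℝ φ (γ s)).le_opNorm _).trans
    (mul_le_mul_of_nonneg_right (hbound _) (norm_nonneg _))

theorem abs_sub_le_mul_rhoW {W φ : E → ℝ} {K : ℝ} (hWc : Continuous W) (hK : 0 ≤ K)
    (hφ : ContDiff ℝ 1 φ) (hgrad : ∀ x, ‖fderiv ℝ φ x‖ ≤ K * W x) (x y : E) :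
    |φ x - φ y| ≤ K * rhoW W x y := by
  rw [rhoW_eq_sInf_weightedLengths, ← smul_eq_mul, ← Real.sInf_smul_of_nonneg hK]
  refine le_csInf ((weightedLengths_nonempty W x y).smul_set) ?_
  rintro _ ⟨_, ⟨γ, hγ, rfl, rfl, rfl⟩, rfl⟩
  dsimp only
  rw [abs_sub_comm, smul_eq_mul, ← intervalIntegral.integral_const_mul]
  simpa only [mul_assoc] using
    abs_sub_le_integral_of_norm_fderiv_le (g := fun x => K * W x) hφ (by fun_prop) hgrad hγ
      zero_le_one

theorem abs_le_of_hasDerivAt_of_abs_sub_le {g b : ℝ → ℝ} {g' a : ℝ} (hg : HasDerivAt g g' a)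
    (hb : ContinuousAt b a) (hbound : ∀ t, |g t - g a| ≤ |t - a| * b t) : |g'| ≤ b a := by
  have hslope : ∀ t ≠ a, |slope g a t| ≤ b t := fun t ht => by
    rw [slope_def_field, abs_div, div_le_iff₀ (abs_pos.2 (sub_ne_zero.2 ht)), mul_comm]
    exact hbound t
  exact le_of_tendsto_of_tendsto ((hasDerivAt_iff_tendsto_slope.1 hg).abs)
    (hb.tendsto.mono_left nhdsWithin_le_nhds)
    (eventually_nhdsWithin_of_forall fun t ht => hslope t ht)

theorem norm_fderiv_le_of_abs_sub_le_mul_rhoW {W φ : E → ℝ} {K : ℝ} {x : E}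
    (hWc : Continuous W) (hW : ∀ x, 0 ≤ W x) (hK : 0 ≤ K) (hφ : DifferentiableAt ℝ φ x)
    (hlip : ∀ y, |φ x - φ y| ≤ K * rhoW W x y) : ‖fderiv ℝ φ x‖ ≤ K * W x := by
  refine ContinuousLinearMap.opNorm_le_bound _ (mul_nonneg hK (hW x)) fun v => ?_
  set m : ℝ → ℝ := fun t => ∫ s in (0:ℝ)..1, W (x + s • t • v)
  have hm : Continuous m :=
    intervalIntegral.continuous_parametric_intervalIntegral_of_continuous' (by fun_prop) 0 1
  have hm0 : m 0 = W x := by simp [m]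
  have hline : HasDerivAt (fun t : ℝ => φ (x + t • v)) (fderiv ℝ φ x v) 0 := by
    have hx : HasFDerivAt φ (fderiv ℝ φ x) (x + (0:ℝ) • v) := by simpa using hφ.hasFDerivAt
    exact hx.comp_hasDerivAt 0 (by simpa using ((hasDerivAt_id (0:ℝ)).smul_const v).const_add x)
  have hbound : ∀ t : ℝ, |φ (x + t • v) - φ (x + (0:ℝ) • v)| ≤ |t - 0| * (K * ‖v‖ * m t) :=
    fun t => calc
      |φ (x + t • v) - φ (x + (0:ℝ) • v)| = |φ x - φ (x + t • v)| := by
        rw [zero_smul, add_zero, abs_sub_comm]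
      _ ≤ K * rhoW W x (x + t • v) := hlip _
      _ ≤ K * (‖t • v‖ * m t) := mul_le_mul_of_nonneg_left (rhoW_add_le hW x _) hK
      _ = |t - 0| * (K * ‖v‖ * m t) := by rw [norm_smul, Real.norm_eq_abs, sub_zero]; ring
  rw [Real.norm_eq_abs, mul_right_comm, ← hm0]
  exact abs_le_of_hasDerivAt_of_abs_sub_le (b := fun t => K * ‖v‖ * m t) hline (by fun_prop)
    hbound

theorem exists_abs_add_le_of_sub_le_add {X : Type*} [Nonempty X] {f u : X → ℝ}
    (h : ∀ x y, f x - f y ≤ u x + u y) : ∃ c, ∀ x, |f x + c| ≤ u x := by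
  have hbdd : BddAbove (Set.range fun x => f x - u x) := by
    obtain ⟨y⟩ := ‹Nonempty X›
    exact ⟨f y + u y, by rintro _ ⟨x, rfl⟩; linarith [h x y]⟩
  refine ⟨-⨆ x, (f x - u x), fun x => abs_le.2 ⟨?_, ?_⟩⟩
  · linarith [ciSup_le fun y => (by linarith [h y x] : f y - u y ≤ f x + u x)]
  · linarith [le_ciSup hbdd x]

end

theorem lipschitz_dHat_iff_gradient_and_pointwise_bound_general
    (V W : B → ℝ) (hWcont : Continuous W)
    (hW1 : ∀ x, 1 ≤ W x)
    (β δ : ℝ) (hδ : 0 < δ)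
    (φ : B → ℝ) (hφ : ContDiff ℝ 1 φ) :
    (∀ x y, |φ x - φ y| ≤ dHat V W β δ x y) ↔
      ∃ c : ℝ, (∀ x, ‖fderiv ℝ φ x‖ ≤ δ⁻¹ * W x) ∧ (∀ x, |φ x + c| ≤ 1 + β * V x) := by
  have hW : ∀ x, 0 ≤ W x := fun x => zero_le_one.trans (hW1 x)
  constructor
  · intro h
    obtain ⟨c, hc⟩ := exists_abs_add_le_of_sub_le_add (f := φ) (u := fun x => 1 + β * V x)
      fun x y => by linarith [(le_abs_self _).trans ((h x y).trans (min_le_right _ _))]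
    exact ⟨c, fun x => norm_fderiv_le_of_abs_sub_le_mul_rhoW hWcont hW (inv_nonneg.2 hδ.le)
      (hφ.differentiable one_ne_zero x) fun y => (h x y).trans (min_le_left _ _), hc⟩
  · rintro ⟨c, hgrad, hpt⟩ x y
    refine le_min (abs_sub_le_mul_rhoW hWcont (inv_nonneg.2 hδ.le) hφ hgrad x y) ?_
    calc |φ x - φ y| = |(φ x + c) - (φ y + c)| := by rw [add_sub_add_right_eq_sub]
      _ ≤ |φ x + c| + |φ y + c| := abs_sub _ _
      _ ≤ 2 + β * V x + β * V y := by linarith [hpt x, hpt y]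

/-- a `C¹` function `φ` is 1-Lipschitz with respect to `d̂_{β,δ}` if and
only if (after possibly adding a constant to `φ`) one has `‖Dφ(x)‖ ≤ δ⁻¹ W(x)` and
`|φ(x)| ≤ 1 + β V(x)` for all `x`. -/
theorem lipschitz_dHat_iff_gradient_and_pointwise_bound
    (V W : B → ℝ) (hVcont : Continuous V) (hWcont : Continuous W)
    (hV1 : ∀ x, 1 ≤ V x) (hW1 : ∀ x, 1 ≤ W x)
    (β δ : ℝ) (hβ : 0 < β) (hδ : 0 < δ)
    (φ : B → ℝ) (hφ : ContDiff ℝ 1 φ) :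
    (∀ x y, |φ x - φ y| ≤ dHat V W β δ x y) ↔
      ∃ c : ℝ, (∀ x, ‖fderiv ℝ φ x‖ ≤ δ⁻¹ * W x) ∧ (∀ x, |φ x + c| ≤ 1 + β * V x) :=
  lipschitz_dHat_iff_gradient_and_pointwise_bound_general V W hWcont hW1 β δ hδ φ hφ
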